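/- arXiv:2503.02094 — 2 statements merged into one kernel-verified Lean document; each statement's English description precedes it below -/
import Mathlib

section
/- If a block-lower-triangular matrix Φx satisfies the affine constraint (I - ZA)Φx - ZB Φu = I where Z is the block-lower shift matrix (so ZA and ZB are strictly block-lower-triangular), then every diagonal block of Φx is the identity matrix, and consequently Φx is invertible. -/
open Matrix

/-- A block matrix (blocks indexed by `Fin (T+1)`) is block lower triangular. -/
def BlockLowerTri {T n m : ℕ} (M : Matrix (Fin (T+1) × Fin n) (Fin (T+1) × Fin m) ℝ) : Prop :=
  ∀ i j, (i.1 : ℕ) < (j.1 : ℕ) → M i j = 0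

/-- Strictly block lower triangular: block `(t,t')` vanishes unless `t' < t`. -/
def StrictBlockLowerTri {T n m : ℕ} (M : Matrix (Fin (T+1) × Fin n) (Fin (T+1) × Fin m) ℝ) : Prop :=
  ∀ i j, (i.1 : ℕ) ≤ (j.1 : ℕ) → M i j = 0

/-- Strictly block lower triangular rectangular matrix with `T` block columns. -/
def StrictBlockLowerTriRect {T n m : ℕ}
    (M : Matrix (Fin (T+1) × Fin n) (Fin T × Fin m) ℝ) : Prop :=
  ∀ i j, (i.1 : ℕ) ≤ (j.1 : ℕ) → M i j = 0

/-- If a block-lower-triangular `Φx` satisfies the affine SLS constraint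
`(I - ZA) Φx - ZB Φu = I`, where `ZA` and `ZB` are strictly block lower triangular,
then every diagonal block of `Φx` is the identity, and `Φx` is invertible. -/
theorem diag_blocks_identity_of_affine_constraint {T n m : ℕ}
    (ZA : Matrix (Fin (T+1) × Fin n) (Fin (T+1) × Fin n) ℝ)
    (ZB : Matrix (Fin (T+1) × Fin n) (Fin T × Fin m) ℝ)
    (Φx : Matrix (Fin (T+1) × Fin n) (Fin (T+1) × Fin n) ℝ)
    (Φu : Matrix (Fin T × Fin m) (Fin (T+1) × Fin n) ℝ)
    (hZA : StrictBlockLowerTri ZA) (hZB : StrictBlockLowerTriRect ZB)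
    (hΦx : BlockLowerTri Φx)
    (hΦu : ∀ (i : Fin T × Fin m) (j : Fin (T+1) × Fin n),
      (i.1 : ℕ) < (j.1 : ℕ) → Φu i j = 0)
    (haff : (1 - ZA) * Φx - ZB * Φu = 1) :
    (∀ (t : Fin (T+1)) (a b : Fin n), Φx (t, a) (t, b) = if a = b then 1 else 0) ∧
      IsUnit Φx := by
  have key : Φx = 1 + ZB * Φu + ZA * Φx := by
    rw [sub_mul, one_mul] at haff
    exact sub_eq_iff_eq_add.mp (sub_eq_iff_eq_add.mp haff)
  have hdiag : ∀ (t : Fin (T+1)) (a b : Fin n),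
      Φx (t, a) (t, b) = if a = b then 1 else 0 := by
    intro t a b
    have h := congrFun (congrFun key (t, a)) (t, b)
    rw [Matrix.add_apply, Matrix.add_apply, Matrix.mul_apply, Matrix.mul_apply] at h
    have s1 : ∑ k, ZA (t, a) k * Φx k (t, b) = 0 := by
      apply Finset.sum_eq_zero
      intro k _
      rcases le_or_gt (t : ℕ) (k.1 : ℕ) with hle | hlt
      · rw [hZA _ _ hle, zero_mul]
      · rw [hΦx _ _ hlt, mul_zero]
    have s2 : ∑ k, ZB (t, a) k * Φu k (t, b) = 0 := by
      apply Finset.sum_eq_zero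
      intro k _
      rcases le_or_gt (t : ℕ) (k.1 : ℕ) with hle | hlt
      · rw [hZB _ _ hle, zero_mul]
      · rw [hΦu _ _ hlt, mul_zero]
    rw [s1, s2, add_zero, add_zero] at h
    rw [h, Matrix.one_apply]
    simp [Prod.ext_iff]
  refine ⟨hdiag, ?_⟩
  set e := finProdFinEquiv (m := T + 1) (n := n) with he
  -- Φx is lower triangular with respect to the linear order induced by `e`
  have hlt : ∀ p q : Fin (T+1) × Fin n, ((e p : ℕ) < (e q : ℕ)) → Φx p q = 0 := by
    intro p q hpq
    have hp : ((e p : Fin ((T+1)*n)) : ℕ) = (p.2 : ℕ) + n * (p.1 : ℕ) := rfl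
    have hq : ((e q : Fin ((T+1)*n)) : ℕ) = (q.2 : ℕ) + n * (q.1 : ℕ) := rfl
    rw [hp, hq] at hpq
    have hpn : (p.2 : ℕ) < n := p.2.isLt
    have hqn : (q.2 : ℕ) < n := q.2.isLt
    have : (p.1 : ℕ) < (q.1 : ℕ) ∨ ((p.1 : ℕ) = (q.1 : ℕ) ∧ (p.2 : ℕ) < (q.2 : ℕ)) := by
      rcases lt_trichotomy (p.1 : ℕ) (q.1 : ℕ) with h | h | h
      · exact Or.inl h
      · rw [h] at hpq; exact Or.inr ⟨h, by omega⟩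
      · exfalso; nlinarith
    rcases this with h | ⟨h1, h2⟩
    · exact hΦx p q h
    · have hq1 : q.1 = p.1 := Fin.ext h1.symm
      have := hdiag p.1 p.2 q.2
      obtain ⟨p1, p2⟩ := p
      obtain ⟨q1, q2⟩ := q
      simp only at hq1 h2 this
      subst hq1
      rw [this, if_neg (by intro hab; subst hab; exact lt_irrefl _ h2)]
  have hM : (Matrix.reindex e e Φx).BlockTriangular OrderDual.toDual := by
    intro i j hij
    have hij' : (i : ℕ) < (j : ℕ) := hij
    rw [Matrix.reindex_apply, Matrix.submatrix_apply]
    apply hlt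
    rw [Equiv.apply_symm_apply, Equiv.apply_symm_apply]
    exact hij'
  have hdet : (Matrix.reindex e e Φx).det = 1 := by
    rw [Matrix.det_of_lowerTriangular _ hM]
    apply Finset.prod_eq_one
    intro i _
    rw [Matrix.reindex_apply, Matrix.submatrix_apply]
    have h := hdiag (e.symm i).1 (e.symm i).2 (e.symm i).2
    simpa using h
  have : Φx.det = 1 := by rwa [Matrix.det_reindex_self] at hdet
  rw [Matrix.isUnit_iff_isUnit_det, this]
  exact isUnit_one
end

section
/- Suppose {Ψx*, Ψu*} solves the transformed SLS problem (minimizing ‖F^{1/2}[Ψx;Ψu]Λ^{1/2}‖_F² subject to Z_{A,B}[Ψx;Ψu] = V and constraints on Ψ V^T). Then {Ψx* V^T, Ψu* V^T} solves the original problem (minimizing ‖F^{1/2}[Φx;Φu]Θ^{1/2}‖_F² subject to Z_{A,B}[Φx;Φu] = I and the corresponding constraints on Φ), and both problems have the same optimal value. -/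
open Matrix

/-- Squared Frobenius norm. -/
def frobSq {m n : Type*} [Fintype m] [Fintype n] (M : Matrix m n ℝ) : ℝ :=
  ∑ i, ∑ j, (M i j) ^ 2

lemma frobSq_eq_trace {m n : Type*} [Fintype m] [Fintype n] (A : Matrix m n ℝ) :
    frobSq A = Matrix.trace (A * Aᵀ) := by
  simp [frobSq, Matrix.trace, Matrix.mul_apply, sq]

lemma frobSq_mul_orth {m n : Type*} [Fintype m] [Fintype n] [DecidableEq n]
    (A : Matrix m n ℝ) (V : Matrix n n ℝ) (hV : Vᵀ * V = 1) :
    frobSq (A * Vᵀ) = frobSq A := by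
  rw [frobSq_eq_trace, frobSq_eq_trace]
  have : A * Vᵀ * (A * Vᵀ)ᵀ = A * Aᵀ := by
    rw [Matrix.transpose_mul, Matrix.transpose_transpose]
    calc A * Vᵀ * (V * Aᵀ) = A * (Vᵀ * V) * Aᵀ := by simp only [Matrix.mul_assoc]
    _ = A * Aᵀ := by rw [hV, Matrix.mul_one]
  rw [this]

/-- If `Ψ*` solves the transformed SLS problem (minimizing
`‖F^{1/2} Ψ Λ^{1/2}‖_F²` subject to `Z_{A,B} Ψ = V` and `Ψ Vᵀ` lying in the remaining
constraint set `S`), then `Φ* := Ψ* Vᵀ` solves the original problem (minimizing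
`‖F^{1/2} Φ Θ^{1/2}‖_F²` subject to `Z_{A,B} Φ = I` and `Φ ∈ S`), and the two problems
have the same optimal value.  Here `Θ = V Λ Vᵀ` with `V` orthogonal and `Λ = diag λ`,
and `Θ^{1/2} = V Λ^{1/2} Vᵀ`, `Λ^{1/2} = diag (√λ)`. -/
theorem transformed_problem_solves_original
    {X U : Type*} [Fintype X] [Fintype U] [DecidableEq X]
    (M : Matrix X (X ⊕ U) ℝ)  -- the operator `Z_{A,B} = [I - ZA, -ZB]`
    (V : Matrix X X ℝ) (hV₁ : Vᵀ * V = 1) (hV₂ : V * Vᵀ = 1)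
    (lam : X → ℝ) (hlam : ∀ c, 0 ≤ lam c)
    (Fh : Matrix (X ⊕ U) (X ⊕ U) ℝ)
    (S : Set (Matrix (X ⊕ U) X ℝ))
    (Ψstar : Matrix (X ⊕ U) X ℝ)
    (hfeas : M * Ψstar = V ∧ Ψstar * Vᵀ ∈ S)
    (hopt : ∀ Ψ : Matrix (X ⊕ U) X ℝ, M * Ψ = V → Ψ * Vᵀ ∈ S →
      frobSq (Fh * Ψstar * Matrix.diagonal (fun c => Real.sqrt (lam c))) ≤
        frobSq (Fh * Ψ * Matrix.diagonal (fun c => Real.sqrt (lam c)))) :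
    (M * (Ψstar * Vᵀ) = 1 ∧ Ψstar * Vᵀ ∈ S) ∧
      (∀ Φ : Matrix (X ⊕ U) X ℝ, M * Φ = 1 → Φ ∈ S →
        frobSq (Fh * (Ψstar * Vᵀ) * (V * Matrix.diagonal (fun c => Real.sqrt (lam c)) * Vᵀ)) ≤
          frobSq (Fh * Φ * (V * Matrix.diagonal (fun c => Real.sqrt (lam c)) * Vᵀ))) ∧
      frobSq (Fh * (Ψstar * Vᵀ) * (V * Matrix.diagonal (fun c => Real.sqrt (lam c)) * Vᵀ)) =
        frobSq (Fh * Ψstar * Matrix.diagonal (fun c => Real.sqrt (lam c))) := by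

  obtain ⟨hf1, hf2⟩ := hfeas
  set D := Matrix.diagonal (fun c => Real.sqrt (lam c)) with hD
  have key : ∀ B : Matrix (X ⊕ U) X ℝ, frobSq (Fh * B * (V * D * Vᵀ)) = frobSq (Fh * (B * V) * D) := by
    intro B
    have h1 : Fh * B * (V * D * Vᵀ) = (Fh * (B * V) * D) * Vᵀ := by simp only [Matrix.mul_assoc]
    rw [h1, frobSq_mul_orth _ V hV₁]
  have hΨV : Ψstar * Vᵀ * V = Ψstar := by
    rw [Matrix.mul_assoc, hV₁, Matrix.mul_one]
  refine ⟨⟨by rw [← Matrix.mul_assoc, hf1, hV₂], hf2⟩, ?_, ?_⟩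
  · intro Φ hΦ1 hΦ2
    rw [key, key, hΨV]
    apply hopt
    · rw [← Matrix.mul_assoc, hΦ1, Matrix.one_mul]
    · rw [Matrix.mul_assoc, hV₂, Matrix.mul_one]; exact hΦ2
  · rw [key, hΨV]
end
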